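/- Suppose the WDC holds for all layers with ε < 1/200⁴/d⁶, and x ∈ B(x*, d√ε‖x*‖). Then for every 1 ≤ j ≤ d, ‖∏_{i=j}^1 W_{i,+,x} x − ∏_{i=j}^1 W_{i,+,x*} x*‖ ≤ (1.2/2^{j/2}) ‖x − x*‖. -/

import Mathlib

open Matrix

noncomputable section

/-- Euclidean norm on `Fin k → ℝ`. -/
def vnorm {k : ℕ} (x : Fin k → ℝ) : ℝ := Real.sqrt (∑ i, x i ^ 2)

/-- Angle between two vectors of `Fin k → ℝ` (with Euclidean inner product). -/
def ang {k : ℕ} (x y : Fin k → ℝ) : ℝ := Real.arccos ((x ⬝ᵥ y) / (vnorm x * vnorm y))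

/-- ℓ²→ℓ² operator (spectral) norm of a matrix. -/
def opNorm {m k : ℕ} (M : Matrix (Fin m) (Fin k) ℝ) : ℝ :=
  ‖LinearMap.toContinuousLinearMap (Matrix.toEuclideanLin M)‖

/-- `W_{+,x} = diag(Wx > 0) W`: keeps only rows of `W` with positive dot product with `x`. -/
def Wplus {m k : ℕ} (W : Matrix (Fin m) (Fin k) ℝ) (x : Fin k → ℝ) :
    Matrix (Fin m) (Fin k) ℝ :=
  Matrix.of fun i j => if 0 < W i ⬝ᵥ x then W i j else 0

/-- The Weight Distribution Condition with constant ε. The matrix `M` is the (unique) symmetric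
matrix sending `x̂ ↦ ŷ`, `ŷ ↦ x̂` and vanishing on `span{x,y}ᗮ`. -/
def WDC {m k : ℕ} (W : Matrix (Fin m) (Fin k) ℝ) (ε : ℝ) : Prop :=
  ∀ x y : Fin k → ℝ, x ≠ 0 → y ≠ 0 →
    ∃ M : Matrix (Fin k) (Fin k) ℝ, M.IsSymm ∧
      M.mulVec ((vnorm x)⁻¹ • x) = (vnorm y)⁻¹ • y ∧
      M.mulVec ((vnorm y)⁻¹ • y) = (vnorm x)⁻¹ • x ∧
      (∀ z : Fin k → ℝ, x ⬝ᵥ z = 0 → y ⬝ᵥ z = 0 → M.mulVec z = 0) ∧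
      opNorm ((∑ i : Fin m,
          if 0 < W i ⬝ᵥ x ∧ 0 < W i ⬝ᵥ y then vecMulVec (W i) (W i) else 0) -
        (((Real.pi - ang x y) / (2 * Real.pi)) • (1 : Matrix (Fin k) (Fin k) ℝ) +
          (Real.sin (ang x y) / (2 * Real.pi)) • M)) ≤ ε

/-!
By the WDC each layer `u ↦ W_{+,u} u` is nearly an isometry scaled by `1/√2`. If `‖u - v‖ ≤ τ ‖v‖`,
the angle between `u` and `v` is at most `4τ`, and splitting
`W_{+,u} u - W_{+,v} v = W_{+,u} (u - v) + (W_{+,u} - W_{+,v}) v` gives the one-layer bound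
`‖W_{+,u} u - W_{+,v} v‖ ≤ (√(1/2 + ε) + √(4ε + 3τ)) ‖u - v‖ ≤ (1 + 1/(10d)) ‖u - v‖ / √2`
for `τ = 3d√ε`. Along the two trajectories the distance thus grows by at most `(1 + 1/(10d))/√2`
per layer while the norm of the reference trajectory shrinks by at most `(1 - 2ε)/√2`; over `d`
layers these ratios stay within `6/5` and `1/2`, so the relative distance never exceeds `3d√ε` and
the one-layer bound applies throughout.
-/

section vnorm

variable {k : ℕ}

lemma vnorm_eq_norm (x : Fin k → ℝ) : vnorm x = ‖WithLp.toLp 2 x‖ := by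
  simp [EuclideanSpace.norm_eq, vnorm]

lemma dotProduct_eq_inner (x y : Fin k → ℝ) :
    x ⬝ᵥ y = inner ℝ (WithLp.toLp 2 x) (WithLp.toLp 2 y) := by
  simp [dotProduct, PiLp.inner_apply, mul_comm]

lemma vnorm_nonneg (x : Fin k → ℝ) : 0 ≤ vnorm x := Real.sqrt_nonneg _

lemma vnorm_sq_eq_sum (x : Fin k → ℝ) : vnorm x ^ 2 = ∑ i, x i ^ 2 :=
  Real.sq_sqrt (by positivity)

lemma vnorm_sq (x : Fin k → ℝ) : vnorm x ^ 2 = x ⬝ᵥ x := by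
  simp only [vnorm_sq_eq_sum, dotProduct, ← sq]

lemma vnorm_pos {x : Fin k → ℝ} (hx : x ≠ 0) : 0 < vnorm x := by
  rw [vnorm_eq_norm, norm_pos_iff]
  exact fun h => hx (congrArg WithLp.ofLp h)

lemma vnorm_eq_zero {x : Fin k → ℝ} : vnorm x = 0 ↔ x = 0 := by
  rw [vnorm_eq_norm, norm_eq_zero]
  exact ⟨fun h => congrArg WithLp.ofLp h, fun h => h ▸ rfl⟩

lemma vnorm_sub_comm (x y : Fin k → ℝ) : vnorm (x - y) = vnorm (y - x) := by
  simp only [vnorm_eq_norm, WithLp.toLp_sub, norm_sub_rev]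

lemma vnorm_add_le (x y : Fin k → ℝ) : vnorm (x + y) ≤ vnorm x + vnorm y := by
  simp only [vnorm_eq_norm, WithLp.toLp_add, norm_add_le]

lemma vnorm_sub_vnorm_le (x y : Fin k → ℝ) : vnorm x - vnorm y ≤ vnorm (x - y) := by
  simp only [vnorm_eq_norm, WithLp.toLp_sub, norm_sub_norm_le]

lemma abs_dotProduct_le (x y : Fin k → ℝ) : |x ⬝ᵥ y| ≤ vnorm x * vnorm y := by
  simp only [dotProduct_eq_inner, vnorm_eq_norm, abs_real_inner_le_norm]

lemma vnorm_sub_sq (x y : Fin k → ℝ) :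
    vnorm (x - y) ^ 2 = vnorm x ^ 2 - 2 * (x ⬝ᵥ y) + vnorm y ^ 2 := by
  simp only [vnorm_sq, dotProduct_sub, sub_dotProduct, dotProduct_comm y x]
  ring

lemma abs_dotProduct_mulVec_le (M : Matrix (Fin k) (Fin k) ℝ) (v : Fin k → ℝ) :
    |v ⬝ᵥ (M *ᵥ v)| ≤ opNorm M * vnorm v ^ 2 := by
  set T := LinearMap.toContinuousLinearMap (toEuclideanLin M)
  have hT : M *ᵥ v = WithLp.ofLp (T (WithLp.toLp 2 v)) := rfl
  calc |v ⬝ᵥ (M *ᵥ v)| ≤ vnorm v * ‖T (WithLp.toLp 2 v)‖ := by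
        rw [hT, dotProduct_eq_inner, vnorm_eq_norm]
        exact abs_real_inner_le_norm _ _
    _ ≤ vnorm v * (opNorm M * vnorm v) := by
        rw [vnorm_eq_norm]
        exact mul_le_mul_of_nonneg_left (T.le_opNorm _) (norm_nonneg _)
    _ = opNorm M * vnorm v ^ 2 := by ring

end vnorm

lemma le_sqrt_mul_of_sq_le {a b c : ℝ} (ha : 0 ≤ a) (hb : 0 ≤ b) (h : a ^ 2 ≤ c * b ^ 2) :
    a ≤ Real.sqrt c * b := by
  rw [← Real.sqrt_sq ha, ← Real.sqrt_sq hb, ← Real.sqrt_mul' _ (sq_nonneg b)]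
  exact Real.sqrt_le_sqrt h

lemma sqrt_mul_le_of_le_sq {a b c : ℝ} (ha : 0 ≤ a) (hb : 0 ≤ b) (h : c * b ^ 2 ≤ a ^ 2) :
    Real.sqrt c * b ≤ a := by
  rw [← Real.sqrt_sq ha, ← Real.sqrt_sq hb, ← Real.sqrt_mul' _ (sq_nonneg b)]
  exact Real.sqrt_le_sqrt h

section Wplus

variable {m k : ℕ}

lemma dotProduct_sum_ite_vecMulVec_mulVec (W : Matrix (Fin m) (Fin k) ℝ) (p : Fin m → Prop)
    [DecidablePred p] (z : Fin k → ℝ) :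
    z ⬝ᵥ ((∑ i, if p i then vecMulVec (W i) (W i) else 0) *ᵥ z) =
      ∑ i, if p i then (W i ⬝ᵥ z) ^ 2 else 0 := by
  rw [sum_mulVec, dotProduct_sum]
  refine Finset.sum_congr rfl fun i _ => ?_
  split_ifs
  · simp [vecMulVec_mulVec, dotProduct_comm z, sq]
  · simp

lemma Wplus_mulVec_apply (W : Matrix (Fin m) (Fin k) ℝ) (u z : Fin k → ℝ) (i : Fin m) :
    (Wplus W u *ᵥ z) i = if 0 < W i ⬝ᵥ u then W i ⬝ᵥ z else 0 := by
  by_cases h : 0 < W i ⬝ᵥ u <;> simp [Wplus, mulVec, h]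

lemma vnorm_Wplus_mulVec_sq (W : Matrix (Fin m) (Fin k) ℝ) (u z : Fin k → ℝ) :
    vnorm (Wplus W u *ᵥ z) ^ 2 = ∑ i, if 0 < W i ⬝ᵥ u then (W i ⬝ᵥ z) ^ 2 else 0 := by
  rw [vnorm_sq]
  refine Finset.sum_congr rfl fun i _ => ?_
  rw [Wplus_mulVec_apply]
  split_ifs <;> ring

lemma ang_self {v : Fin k → ℝ} (hv : v ≠ 0) : ang v v = 0 := by
  rw [ang, ← sq, vnorm_sq, div_self (vnorm_sq v ▸ (pow_pos (vnorm_pos hv) 2).ne'),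
    Real.arccos_one]

lemma abs_dotProduct_mulVec_sub_le_of_swap {M : Matrix (Fin k) (Fin k) ℝ} {u v : Fin k → ℝ}
    (hu : u ≠ 0) (hv : v ≠ 0)
    (hMu : M *ᵥ ((vnorm u)⁻¹ • u) = (vnorm v)⁻¹ • v)
    (hMv : M *ᵥ ((vnorm v)⁻¹ • v) = (vnorm u)⁻¹ • u) :
    |(u - v) ⬝ᵥ (M *ᵥ (u - v))| ≤ vnorm (u - v) ^ 2 := by
  have hp := vnorm_pos hu
  have hq := vnorm_pos hv
  have hMu' : M *ᵥ u = (vnorm u / vnorm v) • v := by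
    conv_lhs => rw [← smul_inv_smul₀ hp.ne' u]
    rw [mulVec_smul, hMu, smul_smul, div_eq_mul_inv]
  have hMv' : M *ᵥ v = (vnorm v / vnorm u) • u := by
    conv_lhs => rw [← smul_inv_smul₀ hq.ne' v]
    rw [mulVec_smul, hMv, smul_smul, div_eq_mul_inv]
  have hzMz : (u - v) ⬝ᵥ (M *ᵥ (u - v)) =
      ((vnorm u ^ 2 + vnorm v ^ 2) * (u ⬝ᵥ v) - 2 * vnorm u ^ 2 * vnorm v ^ 2) /
        (vnorm u * vnorm v) := by
    simp only [mulVec_sub, hMu', hMv', dotProduct_sub, sub_dotProduct, dotProduct_smul,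
      smul_eq_mul, ← vnorm_sq, dotProduct_comm v u]
    field_simp
    ring
  obtain ⟨hc₁, hc₂⟩ := abs_le.mp (abs_dotProduct_le u v)
  rw [hzMz, vnorm_sub_sq, abs_div, abs_of_pos (mul_pos hp hq), div_le_iff₀ (mul_pos hp hq),
    abs_le]
  constructor
  · nlinarith [mul_nonneg (sq_nonneg (vnorm u - vnorm v)) (neg_le_iff_add_nonneg.mp hc₁)]
  · nlinarith [mul_nonneg (sq_nonneg (vnorm u + vnorm v)) (sub_nonneg.mpr hc₂)]

end Wplus

lemma sq_ite_sub_ite_le (a b : ℝ) :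
    ((if 0 < a then b else 0) - (if 0 < b then b else 0)) ^ 2 ≤
      (if 0 < a then (a - b) ^ 2 else 0) + (if 0 < b then (a - b) ^ 2 else 0) -
        2 * (if 0 < a ∧ 0 < b then (a - b) ^ 2 else 0) := by
  rcases lt_or_ge 0 a with ha | ha <;> rcases lt_or_ge 0 b with hb | hb <;>
    simp only [ha, hb, not_lt.mpr, if_true, if_false, and_self, and_false, false_and] <;> nlinarith

namespace WDC

variable {m k : ℕ} {W : Matrix (Fin m) (Fin k) ℝ} {ε : ℝ}

lemma abs_vnorm_Wplus_mulVec_sq_sub_le (hW : WDC W ε) {v : Fin k → ℝ} (hv : v ≠ 0)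
    (z : Fin k → ℝ) : |vnorm (Wplus W v *ᵥ z) ^ 2 - vnorm z ^ 2 / 2| ≤ ε * vnorm z ^ 2 := by
  obtain ⟨M, -, -, -, -, hM⟩ := hW v v hv hv
  simp only [ang_self hv, and_self, Real.sin_zero, zero_div, zero_smul, add_zero, sub_zero,
    div_mul_cancel_right₀ Real.pi_pos.ne'] at hM
  have h := (abs_dotProduct_mulVec_le _ z).trans (mul_le_mul_of_nonneg_right hM (sq_nonneg _))
  rwa [sub_mulVec, dotProduct_sub, dotProduct_sum_ite_vecMulVec_mulVec, smul_mulVec,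
    one_mulVec, dotProduct_smul, smul_eq_mul, ← vnorm_sq, ← vnorm_Wplus_mulVec_sq,
    inv_mul_eq_div] at h

lemma le_sum_sq_of_pos_of_pos (hW : WDC W ε) {u v : Fin k → ℝ} (hu : u ≠ 0) (hv : v ≠ 0) :
    (1 / 2 - ang u v / Real.pi - ε) * vnorm (u - v) ^ 2 ≤
      ∑ i, if 0 < W i ⬝ᵥ u ∧ 0 < W i ⬝ᵥ v then (W i ⬝ᵥ (u - v)) ^ 2 else 0 := by
  obtain ⟨M, -, hMu, hMv, -, hM⟩ := hW u v hu hv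
  have h := (abs_dotProduct_mulVec_le _ (u - v)).trans
    (mul_le_mul_of_nonneg_right hM (sq_nonneg _))
  rw [sub_mulVec, dotProduct_sub, add_mulVec, dotProduct_add, smul_mulVec, one_mulVec,
    dotProduct_smul, smul_mulVec, dotProduct_smul, smul_eq_mul, smul_eq_mul,
    dotProduct_sum_ite_vecMulVec_mulVec, ← vnorm_sq] at h
  set θ := ang u v
  have hθ : 0 ≤ θ := Real.arccos_nonneg _
  have hsin : 0 ≤ Real.sin θ := Real.sin_nonneg_of_nonneg_of_le_pi hθ (Real.arccos_le_pi _)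
  have hMz : -(θ * vnorm (u - v) ^ 2) ≤ Real.sin θ * ((u - v) ⬝ᵥ (M *ᵥ (u - v))) := by
    have := (abs_le.mp (abs_dotProduct_mulVec_sub_le_of_swap hu hv hMu hMv)).1
    nlinarith [Real.sin_le hθ, sq_nonneg (vnorm (u - v))]
  have hπ := Real.pi_pos
  have key : (1 / 2 - θ / Real.pi - ε) * vnorm (u - v) ^ 2 =
      (Real.pi - θ) / (2 * Real.pi) * vnorm (u - v) ^ 2 +
        -(θ * vnorm (u - v) ^ 2) / (2 * Real.pi) - ε * vnorm (u - v) ^ 2 := by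
    field_simp
    ring
  have hdiv := div_le_div_of_nonneg_right hMz (by positivity : (0 : ℝ) ≤ 2 * Real.pi)
  rw [key]
  linarith [(abs_le.mp h).1, div_mul_eq_mul_div (Real.sin θ) (2 * Real.pi)
    ((u - v) ⬝ᵥ (M *ᵥ (u - v)))]

lemma vnorm_Wplus_mulVec_le (hW : WDC W ε) (u z : Fin k → ℝ) :
    vnorm (Wplus W u *ᵥ z) ≤ Real.sqrt (1 / 2 + ε) * vnorm z := by
  by_cases hu : u = 0
  · have : Wplus W u = 0 := by ext; simp [Wplus, hu]
    rw [this, zero_mulVec, vnorm_eq_zero.mpr rfl]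
    exact mul_nonneg (Real.sqrt_nonneg _) (vnorm_nonneg _)
  refine le_sqrt_mul_of_sq_le (vnorm_nonneg _) (vnorm_nonneg _) ?_
  linarith [(abs_le.mp (abs_vnorm_Wplus_mulVec_sq_sub_le hW hu z)).2]

lemma sqrt_mul_vnorm_le_vnorm_Wplus_mulVec_self (hW : WDC W ε) (v : Fin k → ℝ) :
    Real.sqrt (1 / 2 - ε) * vnorm v ≤ vnorm (Wplus W v *ᵥ v) := by
  by_cases hv : v = 0
  · rw [vnorm_eq_zero.mpr hv, mul_zero]
    exact vnorm_nonneg _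
  refine sqrt_mul_le_of_le_sq (vnorm_nonneg _) (vnorm_nonneg _) ?_
  linarith [(abs_le.mp (abs_vnorm_Wplus_mulVec_sq_sub_le hW hv v)).1]

lemma vnorm_Wplus_sub_Wplus_mulVec_le (hW : WDC W ε) {u v : Fin k → ℝ} (hu : u ≠ 0)
    (hv : v ≠ 0) :
    vnorm ((Wplus W u - Wplus W v) *ᵥ v) ≤
      Real.sqrt (4 * ε + 2 * ang u v / Real.pi) * vnorm (u - v) := by
  refine le_sqrt_mul_of_sq_le (vnorm_nonneg _) (vnorm_nonneg _) ?_
  have hsum : vnorm ((Wplus W u - Wplus W v) *ᵥ v) ^ 2 ≤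
      vnorm (Wplus W u *ᵥ (u - v)) ^ 2 + vnorm (Wplus W v *ᵥ (u - v)) ^ 2 -
        2 * ∑ i, if 0 < W i ⬝ᵥ u ∧ 0 < W i ⬝ᵥ v then (W i ⬝ᵥ (u - v)) ^ 2 else 0 := by
    rw [vnorm_sq_eq_sum, vnorm_Wplus_mulVec_sq, vnorm_Wplus_mulVec_sq, Finset.mul_sum,
      ← Finset.sum_add_distrib, ← Finset.sum_sub_distrib]
    refine Finset.sum_le_sum fun i _ => ?_
    rw [sub_mulVec, Pi.sub_apply, Wplus_mulVec_apply, Wplus_mulVec_apply, dotProduct_sub]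
    exact sq_ite_sub_ite_le (W i ⬝ᵥ u) (W i ⬝ᵥ v)
  have hu' := (abs_le.mp (abs_vnorm_Wplus_mulVec_sq_sub_le hW hu (u - v))).2
  have hv' := (abs_le.mp (abs_vnorm_Wplus_mulVec_sq_sub_le hW hv (u - v))).2
  have huv := le_sum_sq_of_pos_of_pos hW hu hv
  have : 2 * ang u v / Real.pi = 2 * (ang u v / Real.pi) := by ring
  rw [this]
  nlinarith

end WDC

section angle

variable {k : ℕ}

lemma ne_zero_of_vnorm_sub_le {u v : Fin k → ℝ} (hv : v ≠ 0) {τ : ℝ} (hτ : τ < 1)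
    (h : vnorm (u - v) ≤ τ * vnorm v) : u ≠ 0 := by
  rintro rfl
  rw [vnorm_sub_comm, sub_zero] at h
  nlinarith [vnorm_pos hv]

lemma ang_le_of_vnorm_sub_le {u v : Fin k → ℝ} (hv : v ≠ 0) {τ : ℝ} (hτ₀ : 0 ≤ τ)
    (hτ : τ ≤ 1 / 2) (h : vnorm (u - v) ≤ τ * vnorm v) : ang u v ≤ 4 * τ := by
  have hp := vnorm_pos (ne_zero_of_vnorm_sub_le hv (by linarith) h)
  have hq := vnorm_pos hv
  have hsq : vnorm u ^ 2 - 2 * (u ⬝ᵥ v) + vnorm v ^ 2 ≤ τ ^ 2 * vnorm v ^ 2 := by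
    rw [← vnorm_sub_sq, ← mul_pow]
    exact pow_le_pow_left₀ (vnorm_nonneg _) h 2
  have hqp : vnorm v - vnorm u ≤ τ * vnorm v :=
    (vnorm_sub_vnorm_le v u).trans (vnorm_sub_comm v u ▸ h)
  have hpq : vnorm v ≤ 2 * vnorm u := by nlinarith
  have hcos : 1 - 2 * τ ^ 2 ≤ (u ⬝ᵥ v) / (vnorm u * vnorm v) := by
    rw [le_div_iff₀ (mul_pos hp hq)]
    nlinarith [sq_nonneg (vnorm u - vnorm v),
      mul_nonneg (mul_nonneg (sq_nonneg τ) hq.le) (by linarith : 0 ≤ 4 * vnorm u - vnorm v)]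
  -- `cos (4τ) = 1 - 2 sin² (2τ)` and Jordan's inequality gives `sin (2τ) ≥ 4τ/π ≥ τ`
  have hsin : τ ≤ Real.sin (2 * τ) := by
    have := Real.mul_le_sin (by linarith : 0 ≤ 2 * τ) (by linarith [Real.pi_gt_three])
    rw [div_mul_eq_mul_div, div_le_iff₀ Real.pi_pos] at this
    nlinarith [Real.pi_lt_four, Real.pi_pos]
  have hcos4 : Real.cos (4 * τ) ≤ 1 - 2 * τ ^ 2 := by
    rw [show 4 * τ = 2 * (2 * τ) by ring, Real.cos_two_mul, Real.cos_sq']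
    nlinarith
  calc ang u v ≤ Real.arccos (1 - 2 * τ ^ 2) := Real.arccos_le_arccos hcos
    _ ≤ Real.arccos (Real.cos (4 * τ)) := Real.arccos_le_arccos hcos4
    _ = 4 * τ := Real.arccos_cos (by linarith) (by linarith [Real.pi_gt_three])

end angle

lemma WDC.vnorm_Wplus_mulVec_sub_le {m k : ℕ} {W : Matrix (Fin m) (Fin k) ℝ} {ε : ℝ}
    (hW : WDC W ε) {u v : Fin k → ℝ} {τ : ℝ} (hτ₀ : 0 ≤ τ) (hτ : τ ≤ 1 / 2)
    (h : vnorm (u - v) ≤ τ * vnorm v) :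
    vnorm (Wplus W u *ᵥ u - Wplus W v *ᵥ v) ≤
      (Real.sqrt (1 / 2 + ε) + Real.sqrt (4 * ε + 3 * τ)) * vnorm (u - v) := by
  have hfactor : 0 ≤ Real.sqrt (1 / 2 + ε) + Real.sqrt (4 * ε + 3 * τ) := by positivity
  by_cases hv : v = 0
  · have hu : u = 0 := by
      rw [hv, sub_zero, vnorm_eq_zero.mpr rfl, mul_zero] at h
      exact vnorm_eq_zero.mp (le_antisymm h (vnorm_nonneg u))
    simp only [hu, hv, sub_self, vnorm_eq_zero.mpr rfl, mul_zero, le_refl]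
  have hu := ne_zero_of_vnorm_sub_le hv (by linarith) h
  have hang : 2 * ang u v / Real.pi ≤ 3 * τ := by
    rw [div_le_iff₀ Real.pi_pos]
    nlinarith [ang_le_of_vnorm_sub_le hv hτ₀ hτ h, Real.pi_gt_three]
  calc vnorm (Wplus W u *ᵥ u - Wplus W v *ᵥ v)
      = vnorm (Wplus W u *ᵥ (u - v) + (Wplus W u - Wplus W v) *ᵥ v) := by
        rw [mulVec_sub, sub_mulVec, sub_add_sub_cancel]
    _ ≤ vnorm (Wplus W u *ᵥ (u - v)) + vnorm ((Wplus W u - Wplus W v) *ᵥ v) := vnorm_add_le _ _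
    _ ≤ Real.sqrt (1 / 2 + ε) * vnorm (u - v) + Real.sqrt (4 * ε + 3 * τ) * vnorm (u - v) :=
        add_le_add (vnorm_Wplus_mulVec_le hW u _)
          ((vnorm_Wplus_sub_Wplus_mulVec_le hW hu hv).trans
            (mul_le_mul_of_nonneg_right (Real.sqrt_le_sqrt (by linarith)) (vnorm_nonneg _)))
    _ = (Real.sqrt (1 / 2 + ε) + Real.sqrt (4 * ε + 3 * τ)) * vnorm (u - v) := by ring

lemma one_add_pow_le_one_add_two_mul {x : ℝ} (hx : 0 ≤ x) :
    ∀ n : ℕ, n * x ≤ 1 / 2 → (1 + x) ^ n ≤ 1 + 2 * n * x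
  | 0, _ => by simp
  | n + 1, h => by
    push_cast at h ⊢
    have ih := one_add_pow_le_one_add_two_mul hx n (by nlinarith)
    calc (1 + x) ^ (n + 1) = (1 + x) ^ n * (1 + x) := pow_succ _ _
      _ ≤ (1 + 2 * n * x) * (1 + x) := mul_le_mul_of_nonneg_right ih (by linarith)
      _ ≤ 1 + 2 * (n + 1) * x := by nlinarith

lemma rpow_div_two_eq_sqrt_pow (j : ℕ) : (2 : ℝ) ^ ((j : ℝ) / 2) = Real.sqrt 2 ^ j := by
  rw [Real.sqrt_eq_rpow, ← Real.rpow_mul_natCast zero_le_two, one_div_mul_eq_div]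

lemma le_pow_mul_and_pow_mul_le {a b : ℕ → ℝ} {K β τ δ : ℝ} {N : ℕ} (hK : 0 ≤ K) (hβ : 0 ≤ β)
    (hτ : 0 ≤ τ) (hb₀ : 0 ≤ b 0) (ha₀ : a 0 ≤ δ * b 0) (hKβ : ∀ t < N, K ^ t * δ ≤ τ * β ^ t)
    (hb : ∀ t < N, β * b t ≤ b (t + 1)) (ha : ∀ t < N, a t ≤ τ * b t → a (t + 1) ≤ K * a t) :
    ∀ t ≤ N, a t ≤ K ^ t * a 0 ∧ β ^ t * b 0 ≤ b t
  | 0, _ => by simp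
  | t + 1, ht => by
    have htN : t < N := ht
    obtain ⟨iha, ihb⟩ := le_pow_mul_and_pow_mul_le hK hβ hτ hb₀ ha₀ hKβ hb ha t htN.le
    have hsmall : a t ≤ τ * b t := calc
      a t ≤ K ^ t * (δ * b 0) := iha.trans (mul_le_mul_of_nonneg_left ha₀ (by positivity))
      _ ≤ τ * β ^ t * b 0 := by
        rw [← mul_assoc]; exact mul_le_mul_of_nonneg_right (hKβ t htN) hb₀
      _ ≤ τ * b t := by rw [mul_assoc]; exact mul_le_mul_of_nonneg_left ihb hτ
    constructor
    · calc a (t + 1) ≤ K * a t := ha t htN hsmall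
        _ ≤ K * (K ^ t * a 0) := mul_le_mul_of_nonneg_left iha hK
        _ = K ^ (t + 1) * a 0 := by ring
    · calc β ^ (t + 1) * b 0 = β * (β ^ t * b 0) := by ring
        _ ≤ β * b t := mul_le_mul_of_nonneg_left ihb hβ
        _ ≤ b (t + 1) := hb t htN

lemma mul_pow_mul_sqrt_le_one {D ε : ℝ} (hD : 0 < D) (hε : 0 ≤ ε)
    (h : ε < 1 / 200 ^ 4 / D ^ 6) :
    40000 * D ^ 3 * Real.sqrt ε ≤ 1 := by
  rw [div_div, lt_div_iff₀ (by positivity)] at h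
  refine (sq_le_one_iff₀ (by positivity)).mp ?_
  rw [mul_pow, Real.sq_sqrt hε]
  nlinarith

lemma sqrt_half_add_add_sqrt_le {D ε : ℝ} (hD : 1 ≤ D) (hε : 0 ≤ ε)
    (h : 40000 * D ^ 3 * Real.sqrt ε ≤ 1) :
    Real.sqrt (1 / 2 + ε) + Real.sqrt (4 * ε + 3 * (3 * D * Real.sqrt ε)) ≤
      (Real.sqrt 2)⁻¹ * (1 + 1 / (10 * D)) := by
  set e := Real.sqrt ε
  have he : 0 ≤ e := Real.sqrt_nonneg ε
  have hεe : ε = e ^ 2 := (Real.sq_sqrt hε).symm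
  have hD3 : D ≤ D ^ 3 := le_self_pow₀ hD (by norm_num)
  have hD2 : D ^ 2 ≤ D ^ 3 := pow_le_pow_right₀ hD (by norm_num)
  have hDe : D * e ≤ 1 / 40000 := by nlinarith
  have hD2e : D ^ 2 * e ≤ 1 / 40000 := by nlinarith
  set ρ := (Real.sqrt 2)⁻¹
  have hρ2 : ρ ^ 2 = 1 / 2 := by rw [inv_pow, Real.sq_sqrt zero_le_two, one_div]
  have hρ : 7 / 10 ≤ ρ := by nlinarith [inv_nonneg.mpr (Real.sqrt_nonneg 2)]
  have h₁ : Real.sqrt (1 / 2 + ε) ≤ ρ + ε :=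
    Real.sqrt_le_iff.mpr ⟨by positivity, by nlinarith⟩
  have h₂ : Real.sqrt (4 * ε + 3 * (3 * D * e)) ≤ 1 / (50 * D) := by
    refine Real.sqrt_le_iff.mpr ⟨by positivity, ?_⟩
    rw [div_pow, le_div_iff₀ (by positivity), hεe]
    nlinarith
  have h₃ : ε ≤ 1 / (20 * D) := by
    rw [le_div_iff₀ (by positivity), hεe]
    nlinarith
  calc Real.sqrt (1 / 2 + ε) + Real.sqrt (4 * ε + 3 * (3 * D * e))
      ≤ ρ + (1 / (20 * D) + 1 / (50 * D)) := by linarith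
    _ = ρ + 7 / 10 * (1 / (10 * D)) := by field_simp; ring
    _ ≤ ρ * (1 + 1 / (10 * D)) := by nlinarith [one_div_pos.mpr (by positivity : 0 < 10 * D)]

lemma one_add_one_div_pow_le {d t : ℕ} (hd : 1 ≤ d) (ht : t ≤ d) :
    (1 + 1 / (10 * (d : ℝ))) ^ t ≤ 6 / 5 := by
  have hd' : (1 : ℝ) ≤ d := by exact_mod_cast hd
  have htd : (t : ℝ) * (1 / (10 * d)) ≤ 1 / 10 := by
    rw [mul_one_div, div_le_iff₀ (by positivity)]
    linarith [(Nat.cast_le (α := ℝ)).mpr ht]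
  linarith [one_add_pow_le_one_add_two_mul (x := 1 / (10 * d)) (by positivity) t (by linarith)]

lemma mul_one_add_pow_le_three_mul_pow {c ε : ℝ} {d t : ℕ} (hc : 0 ≤ c) (hd : 1 ≤ d)
    (ht : t ≤ d) (hε : 0 ≤ ε) (hdε : 2 * d * ε ≤ 1 / 2) :
    (c * (1 + 1 / (10 * d))) ^ t ≤ 3 * (c * (1 - 2 * ε)) ^ t := by
  have hd' : (1 : ℝ) ≤ d := by exact_mod_cast hd
  have htd : (t : ℝ) ≤ d := by exact_mod_cast ht
  have hdecay : 1 / 2 ≤ (1 - 2 * ε) ^ t := by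
    have := one_add_mul_le_pow (a := -(2 * ε)) (by nlinarith) t
    rw [← sub_eq_add_neg] at this
    nlinarith
  rw [mul_pow, mul_pow]
  nlinarith [one_add_one_div_pow_le hd ht, pow_nonneg hc t]

lemma inv_sqrt_two_mul_one_sub_le_sqrt {ε : ℝ} (hε : 0 ≤ ε) (hε' : ε ≤ 1 / 2) :
    (Real.sqrt 2)⁻¹ * (1 - 2 * ε) ≤ Real.sqrt (1 / 2 - ε) := by
  refine Real.le_sqrt_of_sq_le ?_
  rw [mul_pow, inv_pow, Real.sq_sqrt zero_le_two]
  nlinarith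

theorem vnorm_trajectory_sub_le {n : ℕ → ℕ} {W : ∀ i : ℕ, Matrix (Fin (n (i + 1))) (Fin (n i)) ℝ}
    {d : ℕ} {ε : ℝ} (hd : 1 ≤ d) (hε : 0 < ε) (hε2 : ε < 1 / 200 ^ 4 / (d : ℝ) ^ 6)
    (hWDC : ∀ i < d, WDC (W i) ε) {u v : ∀ t : ℕ, Fin (n t) → ℝ}
    (hu : ∀ t, u (t + 1) = Wplus (W t) (u t) *ᵥ u t)
    (hv : ∀ t, v (t + 1) = Wplus (W t) (v t) *ᵥ v t)
    (h₀ : vnorm (u 0 - v 0) ≤ d * Real.sqrt ε * vnorm (v 0)) {t : ℕ} (ht : t ≤ d) :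
    vnorm (u t - v t) ≤ ((Real.sqrt 2)⁻¹ * (1 + 1 / (10 * d))) ^ t * vnorm (u 0 - v 0) := by
  have hd' : (1 : ℝ) ≤ d := by exact_mod_cast hd
  have hsmall := mul_pow_mul_sqrt_le_one (by positivity) hε.le hε2
  have hτ : 3 * d * Real.sqrt ε ≤ 1 / 2 := by nlinarith [le_self_pow₀ hd' (by norm_num : 3 ≠ 0)]
  have hdε : 2 * d * ε ≤ 1 / 2 := by nlinarith [Real.sq_sqrt hε.le, Real.sqrt_nonneg ε]
  have hlower : ∀ t < d, (Real.sqrt 2)⁻¹ * (1 - 2 * ε) * vnorm (v t) ≤ vnorm (v (t + 1)) :=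
    fun t ht => hv t ▸ (mul_le_mul_of_nonneg_right (inv_sqrt_two_mul_one_sub_le_sqrt hε.le
      (by nlinarith)) (vnorm_nonneg _)).trans
        (WDC.sqrt_mul_vnorm_le_vnorm_Wplus_mulVec_self (hWDC t ht) _)
  have hstep : ∀ t < d, vnorm (u t - v t) ≤ 3 * d * Real.sqrt ε * vnorm (v t) →
      vnorm (u (t + 1) - v (t + 1)) ≤
        (Real.sqrt 2)⁻¹ * (1 + 1 / (10 * d)) * vnorm (u t - v t) := fun t ht h =>
    hu t ▸ hv t ▸ (WDC.vnorm_Wplus_mulVec_sub_le (hWDC t ht) (by positivity) hτ h).trans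
      (mul_le_mul_of_nonneg_right (sqrt_half_add_add_sqrt_le hd' hε.le hsmall) (vnorm_nonneg _))
  have hratio : ∀ t < d, ((Real.sqrt 2)⁻¹ * (1 + 1 / (10 * d))) ^ t * (d * Real.sqrt ε) ≤
      3 * d * Real.sqrt ε * ((Real.sqrt 2)⁻¹ * (1 - 2 * ε)) ^ t := fun t ht => by
    have hd0 : (0 : ℝ) ≤ d * Real.sqrt ε := by positivity
    linarith [mul_le_mul_of_nonneg_right (mul_one_add_pow_le_three_mul_pow
      (c := (Real.sqrt 2)⁻¹) (by positivity) hd ht.le hε.le hdε) hd0]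
  exact (le_pow_mul_and_pow_mul_le (by positivity) (mul_nonneg (by positivity) (by nlinarith))
    (by positivity) (vnorm_nonneg _) h₀ hratio hlower hstep t ht).1

theorem stmt19_general (d : ℕ) (n : ℕ → ℕ) (ε : ℝ) (hε : 0 < ε)
    (W : ∀ i : ℕ, Matrix (Fin (n (i + 1))) (Fin (n i)) ℝ)
    (hWDC : ∀ i < d, WDC (W i) ε)
    (hε2 : ε < 1 / 200 ^ 4 / (d : ℝ) ^ 6)
    (xs x : Fin (n 0) → ℝ)
    (hx : vnorm (x - xs) ≤ (d : ℝ) * Real.sqrt ε * vnorm xs)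
    (LamX LamS : ∀ i : ℕ, Matrix (Fin (n i)) (Fin (n 0)) ℝ)
    (hX0 : LamX 0 = 1)
    (hXrec : ∀ i, LamX (i + 1) = Wplus (W i) ((LamX i).mulVec x) * LamX i)
    (hS0 : LamS 0 = 1)
    (hSrec : ∀ i, LamS (i + 1) = Wplus (W i) ((LamS i).mulVec xs) * LamS i)
    (j : ℕ) (hj1 : 1 ≤ j) (hjd : j ≤ d) :
    vnorm ((LamX j).mulVec x - (LamS j).mulVec xs) ≤
      1.2 / (2 : ℝ) ^ ((j : ℝ) / 2) * vnorm (x - xs) := by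
  have hd := hj1.trans hjd
  have hj := vnorm_trajectory_sub_le hd hε hε2 hWDC (u := fun t => LamX t *ᵥ x)
    (v := fun t => LamS t *ᵥ xs) (fun t => by rw [hXrec, ← mulVec_mulVec])
    (fun t => by rw [hSrec, ← mulVec_mulVec]) (by rwa [hX0, hS0, one_mulVec, one_mulVec]) hjd
  rw [hX0, hS0, one_mulVec, one_mulVec] at hj
  calc _ ≤ ((Real.sqrt 2)⁻¹ * (1 + 1 / (10 * d))) ^ j * vnorm (x - xs) := hj
    _ ≤ 6 / 5 * (Real.sqrt 2)⁻¹ ^ j * vnorm (x - xs) := by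
      rw [mul_pow, mul_comm (6 / 5 : ℝ)]
      exact mul_le_mul_of_nonneg_right (mul_le_mul_of_nonneg_left
        (one_add_one_div_pow_le hd hjd) (by positivity)) (vnorm_nonneg _)
    _ = _ := by rw [rpow_div_two_eq_sqrt_pow, inv_pow]; norm_num [div_eq_mul_inv]

theorem stmt19 (d : ℕ) (hd : 1 ≤ d) (n : ℕ → ℕ) (ε : ℝ) (hε : 0 < ε)
    (W : ∀ i : ℕ, Matrix (Fin (n (i + 1))) (Fin (n i)) ℝ)
    (hWDC : ∀ i < d, WDC (W i) ε)
    (hε2 : ε < 1 / 200 ^ 4 / (d : ℝ) ^ 6)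
    (xs x : Fin (n 0) → ℝ) (hxs : xs ≠ 0)
    (hx : vnorm (x - xs) ≤ (d : ℝ) * Real.sqrt ε * vnorm xs)
    (LamX LamS : ∀ i : ℕ, Matrix (Fin (n i)) (Fin (n 0)) ℝ)
    (hX0 : LamX 0 = 1)
    (hXrec : ∀ i, LamX (i + 1) = Wplus (W i) ((LamX i).mulVec x) * LamX i)
    (hS0 : LamS 0 = 1)
    (hSrec : ∀ i, LamS (i + 1) = Wplus (W i) ((LamS i).mulVec xs) * LamS i)
    (j : ℕ) (hj1 : 1 ≤ j) (hjd : j ≤ d) :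
    vnorm ((LamX j).mulVec x - (LamS j).mulVec xs) ≤
      1.2 / (2 : ℝ) ^ ((j : ℝ) / 2) * vnorm (x - xs) :=
  stmt19_general d n ε hε W hWDC hε2 xs x hx LamX LamS hX0 hXrec hS0 hSrec j hj1 hjd

end
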